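/- Let m be a Borel probability measure on a complete separable metric space S. Then for m^∞-almost every sequence x ∈ S^∞, the empirical measures n⁻¹ ∑_{i=1}^n δ_{x_i} converge weakly to m (Varadarajan's theorem). -/

import Mathlib

/-!
The i.i.d. hypothesis identifies `π` with `Measure.infinitePi`, under which the coordinates are
independent with law `m`. The strong law of large numbers, applied to indicator functions, then
shows that almost surely the empirical measures of every set of a fixed countable family converge.
Taking for that family the finite intersections of a countable basis, which form a π-system
containing arbitrarily small neighbourhoods of every point, this convergence already forces weak
convergence: by inclusion–exclusion it passes to finite unions, which approximate every open set
from inside, and the portmanteau theorem concludes.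
-/

open MeasureTheory ProbabilityTheory TopologicalSpace Filter Topology ENNReal

noncomputable section

/-- `π` is the infinite product (i.i.d.) measure on `ℕ → X` with all factors `ν`. -/
def IsIIDProduct {X : Type*} [MeasurableSpace X] (ν : Measure X) (π : Measure (ℕ → X)) : Prop :=
  IsProbabilityMeasure π ∧
    ∀ (n : ℕ) (A : Fin n → Set X), (∀ i, MeasurableSet (A i)) →
      π {x | ∀ i : Fin n, x (i : ℕ) ∈ A i} = ∏ i : Fin n, ν (A i)

section Product

variable {X : Type*} [MeasurableSpace X] {ν : Measure X} [IsProbabilityMeasure ν]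

theorem IsIIDProduct.eq_infinitePi {π : Measure (ℕ → X)} (hπ : IsIIDProduct ν π) :
    π = Measure.infinitePi fun _ ↦ ν := by
  classical
  refine Measure.eq_infinitePi _ fun s t ht ↦ ?_
  obtain ⟨N, hsN⟩ : ∃ N, s ⊆ Finset.range N := ⟨s.sup id + 1, fun i hi ↦
    Finset.mem_range.2 (Nat.lt_succ_of_le (Finset.le_sup (f := id) hi))⟩
  have hbox : Set.pi (↑s) t = {x | ∀ i : Fin N, x i ∈ if (i : ℕ) ∈ s then t i else Set.univ} := by
    ext x
    simp only [Set.mem_pi, Finset.mem_coe, Set.mem_ofPred_eq]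
    refine ⟨fun h i ↦ ?_, fun h i hi ↦ ?_⟩
    · split_ifs with hi
      exacts [h i hi, trivial]
    · simpa [hi] using h ⟨i, Finset.mem_range.1 (hsN hi)⟩
  rw [hbox, hπ.2 N _ fun i ↦ by split_ifs; exacts [ht i, .univ],
    Fin.prod_univ_eq_prod_range (fun i ↦ ν (if i ∈ s then t i else Set.univ)) N]
  simp_rw [apply_ite ν, measure_univ]
  rw [Finset.prod_ite_mem, Finset.inter_eq_right.2 hsN]

variable (ν) in
theorem strong_law_ae_infinitePi {f : X → ℝ} (hf : Measurable f) (hfi : Integrable f ν) :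
    ∀ᵐ x ∂Measure.infinitePi (fun _ ↦ ν),
      Tendsto (fun n : ℕ ↦ (∑ i ∈ Finset.range n, f (x i)) / n) atTop (𝓝 (∫ y, f y ∂ν)) := by
  have hlaw (i : ℕ) : MeasurePreserving (fun x : ℕ → X ↦ x i) (Measure.infinitePi fun _ ↦ ν) ν :=
    measurePreserving_eval_infinitePi _ i
  have hmean : ∫ x, f (x 0) ∂Measure.infinitePi (fun _ ↦ ν) = ∫ y, f y ∂ν := by
    rw [← integral_map (hlaw 0).measurable.aemeasurable hf.aestronglyMeasurable, (hlaw 0).map_eq]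
  have hint : Integrable (fun x : ℕ → X ↦ f (x 0)) (Measure.infinitePi fun _ ↦ ν) :=
    (hlaw 0).integrable_comp_of_integrable hfi
  have hindep := iIndepFun_infinitePi (P := fun _ : ℕ ↦ ν) fun _ ↦ hf
  have hident (i : ℕ) : IdentDistrib (fun x : ℕ → X ↦ f (x i)) (fun x ↦ f (x 0))
      (Measure.infinitePi fun _ ↦ ν) (Measure.infinitePi fun _ ↦ ν) :=
    IdentDistrib.comp ⟨(hlaw i).aemeasurable, (hlaw 0).aemeasurable,
      (hlaw i).map_eq.trans (hlaw 0).map_eq.symm⟩ hf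
  simpa only [hmean] using strong_law_ae_real (fun i (x : ℕ → X) ↦ f (x i)) hint
    (fun i j hij ↦ hindep.indepFun hij) hident

end Product

section Empirical

variable {X : Type*} [MeasurableSpace X]

def empiricalMeasure (x : ℕ → X) (n : ℕ) : Measure X :=
  (n : ℝ≥0∞)⁻¹ • ∑ i ∈ Finset.range n, Measure.dirac (x i)

theorem empiricalMeasure_real_apply (x : ℕ → X) (n : ℕ) {s : Set X} (hs : MeasurableSet s) :
    (empiricalMeasure x n).real s = (∑ i ∈ Finset.range n, s.indicator 1 (x i)) / n := by
  have hfin (i : ℕ) : s.indicator (1 : X → ℝ≥0∞) (x i) ≠ ∞ := by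
    by_cases h : x i ∈ s <;> simp [h]
  simp only [empiricalMeasure, measureReal_def, Measure.smul_apply, Measure.coe_finsetSum,
    Finset.sum_apply, Measure.dirac_apply' _ hs, smul_eq_mul, ENNReal.toReal_mul,
    ENNReal.toReal_inv, ENNReal.toReal_natCast, ENNReal.toReal_sum fun i _ ↦ hfin i,
    inv_mul_eq_div]
  congr 1
  refine Finset.sum_congr rfl fun i _ ↦ ?_
  by_cases h : x i ∈ s <;> simp [h]

theorem ae_tendsto_empiricalMeasure_real (ν : Measure X) [IsProbabilityMeasure ν] {s : Set X}
    (hs : MeasurableSet s) :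
    ∀ᵐ x ∂Measure.infinitePi (fun _ ↦ ν),
      Tendsto (fun n ↦ (empiricalMeasure x n).real s) atTop (𝓝 (ν.real s)) := by
  simpa only [integral_indicator_one hs, ← empiricalMeasure_real_apply _ _ hs] using
    strong_law_ae_infinitePi ν (measurable_one.indicator hs)
      ((integrable_const (1 : ℝ)).indicator hs)

theorem exists_countable_isPiSystem_isOpen_nhds (Y : Type*) [TopologicalSpace Y]
    [SecondCountableTopology Y] :
    ∃ C : Set (Set Y), C.Countable ∧ IsPiSystem C ∧ (∀ s ∈ C, IsOpen s) ∧
      ∀ u, IsOpen u → ∀ y ∈ u, ∃ s ∈ C, s ∈ 𝓝 y ∧ s ⊆ u := by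
  refine ⟨Set.sInter '' {t | t.Finite ∧ t ⊆ countableBasis Y},
    (Set.countable_ofPred_finite_subset (countable_countableBasis Y)).image _, ?_, ?_, ?_⟩
  · rintro _ ⟨t, ⟨ht, htB⟩, rfl⟩ _ ⟨t', ⟨ht', ht'B⟩, rfl⟩ -
    exact ⟨t ∪ t', ⟨ht.union ht', Set.union_subset htB ht'B⟩, Set.sInter_union t t'⟩
  · rintro _ ⟨t, ⟨ht, htB⟩, rfl⟩
    exact ht.isOpen_sInter fun s hs ↦ isOpen_of_mem_countableBasis (htB hs)
  · intro u hu y hy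
    obtain ⟨b, hbB, hyb, hbu⟩ := (isBasis_countableBasis Y).exists_subset_of_mem_open hy hu
    exact ⟨b, ⟨{b}, ⟨Set.finite_singleton b, Set.singleton_subset_iff.2 hbB⟩,
      Set.sInter_singleton b⟩, (isOpen_of_mem_countableBasis hbB).mem_nhds hyb, hbu⟩

theorem ae_tendsto_empiricalMeasure [TopologicalSpace X] [SecondCountableTopology X]
    [OpensMeasurableSpace X] (ν : ProbabilityMeasure X) {μs : (ℕ → X) → ℕ → ProbabilityMeasure X}
    (hμs : ∀ x n, (μs x n : Measure X) = empiricalMeasure x (n + 1)) :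
    ∀ᵐ x ∂Measure.infinitePi (fun _ ↦ (ν : Measure X)), Tendsto (μs x) atTop (𝓝 ν) := by
  obtain ⟨C, hC, hCpi, hCopen, hCnhds⟩ := exists_countable_isPiSystem_isOpen_nhds X
  have hCmeas (s) (hs : s ∈ C) : MeasurableSet s := (hCopen s hs).measurableSet
  have hae : ∀ᵐ x ∂Measure.infinitePi (fun _ ↦ (ν : Measure X)), ∀ s ∈ C,
      Tendsto (fun n ↦ (empiricalMeasure x n).real s) atTop (𝓝 ((ν : Measure X).real s)) :=
    (ae_ball_iff hC).2 fun s hs ↦ ae_tendsto_empiricalMeasure_real _ (hCmeas s hs)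
  filter_upwards [hae] with x hx
  refine hCpi.tendsto_probabilityMeasure_of_tendsto_of_mem hCmeas hCnhds fun s hs ↦ ?_
  rw [← NNReal.tendsto_coe]
  simpa [Function.comp_def, ← ProbabilityMeasure.measureReal_eq_coe_coeFn, hμs] using
    (hx s hs).comp (tendsto_add_atTop_nat 1)

end Empirical

theorem stmt9_general {S : Type*}
    [MetricSpace S] [SeparableSpace S] [MeasurableSpace S] [BorelSpace S]
    (m : Measure S)
    (π : Measure (ℕ → S)) (hπ : IsIIDProduct m π)
    (e : (ℕ → S) → ℕ → ProbabilityMeasure S)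
    (he : ∀ x n, (e x n : Measure S)
      = ((n + 1 : ℕ) : ℝ≥0∞)⁻¹ • ∑ i ∈ Finset.range (n + 1), Measure.dirac (x i))
    (mP : ProbabilityMeasure S) (hmP : (mP : Measure S) = m) :
    ∀ᵐ x ∂π, Tendsto (fun n => e x n) atTop (𝓝 mP) := by
  subst hmP
  have := UniformSpace.secondCountable_of_separable S
  rw [hπ.eq_infinitePi]
  exact ae_tendsto_empiricalMeasure mP he

/-- Varadarajan's theorem: for a Borel probability measure `m` on a Polish space `S`,
for `m^∞`-a.e. sequence `x`, the empirical measures `n⁻¹ ∑_{i=1}^n δ_{x_i}` converge weakly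
to `m`. -/
theorem stmt9 {S : Type*}
    [MetricSpace S] [CompleteSpace S] [SeparableSpace S] [MeasurableSpace S] [BorelSpace S]
    (m : Measure S) [IsProbabilityMeasure m]
    (π : Measure (ℕ → S)) (hπ : IsIIDProduct m π)
    (e : (ℕ → S) → ℕ → ProbabilityMeasure S)
    (he : ∀ x n, (e x n : Measure S)
      = ((n + 1 : ℕ) : ℝ≥0∞)⁻¹ • ∑ i ∈ Finset.range (n + 1), Measure.dirac (x i))
    (mP : ProbabilityMeasure S) (hmP : (mP : Measure S) = m) :
    ∀ᵐ x ∂π, Tendsto (fun n => e x n) atTop (𝓝 mP) :=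
  stmt9_general m π hπ e he mP hmP
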